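/- arXiv:gr-qc/9711022 — 2 statements merged into one kernel-verified Lean document; each statement's English description precedes it below -/
import Mathlib

section
/- Lovelock's dimensionally dependent identity (dimension at most five). Let n ≤ 5 and let T^{abf}_{cde} be a tensor (an array of real numbers indexed by six indices ranging over {1,…,n}) that is antisymmetric in its three upper indices a, b, f, antisymmetric in its three lower indices c, d, e, and trace-free in the sense that the contraction of its third upper index with its third lower index vanishes: T^{abi}_{cdi} = 0 (summing over i). Then T = 0. -/
open scoped ContDiff

noncomputable section

/-- Partial derivative `∂ᵢ f` of a scalar field on flat `ℝⁿ` (points represented as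
`Fin n → ℝ`, standard coordinates) in the `i`-th coordinate direction.  In Cartesian
coordinates on flat space this is the covariant derivative `;i`. -/
def pd {n : ℕ} (i : Fin n) (f : (Fin n → ℝ) → ℝ) : (Fin n → ℝ) → ℝ :=
  fun x => fderiv ℝ f x (Pi.single i 1)

/-- Components `η_{ab}` of the constant diagonal metric with diagonal entries `η a = ±1`;
since the entries are `±1` these coincide with the components `η^{ab}` of the inverse
metric. -/
def gm {n : ℕ} (η : Fin n → ℝ) (a b : Fin n) : ℝ := if a = b then η a else 0

/-- Antisymmetrization over two index slots. -/
def asym2 {n : ℕ} (T : Fin n → Fin n → ℝ) (a b : Fin n) : ℝ := (T a b - T b a) / 2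

/-- Antisymmetrization over three index slots. -/
def asym3 {n : ℕ} (T : Fin n → Fin n → Fin n → ℝ) (a b c : Fin n) : ℝ :=
  (T a b c - T a c b - T b a c + T b c a + T c a b - T c b a) / 6

/-- Simultaneous antisymmetrization over a pair of upper slots and a pair of lower slots. -/
def asym22 {n : ℕ} (T : Fin n → Fin n → Fin n → Fin n → ℝ) (a b c d : Fin n) : ℝ :=
  (T a b c d - T b a c d - T a b d c + T b a d c) / 4

/-- Simultaneous antisymmetrization over a triple of upper slots and a triple of lower
slots (arguments ordered as `T upper₁ upper₂ upper₃ lower₁ lower₂ lower₃`). -/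
def asym33 {n : ℕ} (T : Fin n → Fin n → Fin n → Fin n → Fin n → Fin n → ℝ)
    (a b f c d e : Fin n) : ℝ :=
  asym3 (fun a b f => asym3 (fun c d e => T a b f c d e) c d e) a b f

/-- A Weyl candidate: a 4-tensor field with the index symmetries (3a)–(3d):
antisymmetry in the first and in the second index pair, symmetry under interchange of the
two pairs, vanishing cyclic sum `W_{a[bcd]} = 0`, and vanishing trace `W^a{}_{bad} = 0`
(the trace being taken with the metric `η`). -/
def WeylCandidate {n : ℕ} (η : Fin n → ℝ)
    (W : (Fin n → ℝ) → Fin n → Fin n → Fin n → Fin n → ℝ) : Prop :=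
  (∀ x a b c d, W x a b c d = - W x b a c d) ∧
  (∀ x a b c d, W x a b c d = - W x a b d c) ∧
  (∀ x a b c d, W x a b c d = W x c d a b) ∧
  (∀ x a b c d, asym3 (fun b c d => W x a b c d) b c d = 0) ∧
  (∀ x b d, ∑ a, η a * W x a b a d = 0)

/-- The right-hand side of the Lanczos potential equation (4), in the equivalent fully
lowered form (the free indices `a b`, raised in the paper, are lowered with the invertible
diagonal metric `η`, which only multiplies each component equation by `η a * η b ≠ 0`).
Each contracted (dummy) index pair carries a factor `η i` coming from the inverse
metric. -/
def rhs4 {n : ℕ} (η : Fin n → ℝ) (L : (Fin n → ℝ) → Fin n → Fin n → Fin n → ℝ)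
    (x : Fin n → ℝ) (a b c d : Fin n) : ℝ :=
  -- 2 L^{ab}{}_{[c;d]}
  (pd d (L · a b c) x - pd c (L · a b d) x)
  -- + 2 L_{cd}{}^{[a;b]}
  + (pd b (L · c d a) x - pd a (L · c d b) x)
  -- − (4/(n−2)) δ^{[a}_{[c} ( L^{b]i}{}_{d];i} − L^{b]i}{}_{|i|;d]} + L_{d]i}{}^{b];i} − L_{d]i}{}^{|i|;b]} )
  - (4 / ((n : ℝ) - 2)) *
      asym22 (fun a b c d =>
        gm η a c *
          ∑ i, η i *
            (pd i (L · b i d) x - pd d (L · b i i) x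
              + pd i (L · d i b) x - pd b (L · d i i) x)) a b c d
  -- + (8/((n−2)(n−1))) δ^{a}_{[c} δ^{b}_{d]} L^{ij}{}_{i;j}
  + (8 / (((n : ℝ) - 2) * ((n : ℝ) - 1))) *
      ((gm η a c * gm η b d - gm η a d * gm η b c) / 2) *
      ∑ i, ∑ j, η i * η j * pd j (L · i j i) x

/-- Equation (4): `L` is a Lanczos potential for `W` (fully lowered, equivalent form). -/
def Eq4 {n : ℕ} (η : Fin n → ℝ)
    (W : (Fin n → ℝ) → Fin n → Fin n → Fin n → Fin n → ℝ)
    (L : (Fin n → ℝ) → Fin n → Fin n → Fin n → ℝ) : Prop :=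
  ∀ x a b c d, W x a b c d = rhs4 η L x a b c d

/-- The right-hand side of equation (5) (equation (4) in the Lanczos algebraic gauge
`L_{ab}{}^b = 0`), fully lowered form:
`2 L^{ab}{}_{[c;d]} + 2 L_{cd}{}^{[a;b]} − (4/(n−2)) δ^{[a}_{[c} ( L^{b]i}{}_{d];i} + L_{d]i}{}^{b];i} )`. -/
def rhs5 {n : ℕ} (η : Fin n → ℝ) (L : (Fin n → ℝ) → Fin n → Fin n → Fin n → ℝ)
    (x : Fin n → ℝ) (a b c d : Fin n) : ℝ :=
  (pd d (L · a b c) x - pd c (L · a b d) x)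
  + (pd b (L · c d a) x - pd a (L · c d b) x)
  - (4 / ((n : ℝ) - 2)) *
      asym22 (fun a b c d =>
        gm η a c * ∑ i, η i * (pd i (L · b i d) x + pd i (L · d i b) x)) a b c d

/-- Equation (5). -/
def Eq5 {n : ℕ} (η : Fin n → ℝ)
    (W : (Fin n → ℝ) → Fin n → Fin n → Fin n → Fin n → ℝ)
    (L : (Fin n → ℝ) → Fin n → Fin n → Fin n → ℝ) : Prop :=
  ∀ x a b c d, W x a b c d = rhs5 η L x a b c d

/-- Constraint (8), fully lowered form:
`W^{[ab}{}_{[cd;e]}{}^{f]} = (1/(n−4)) δ^{[a}_{[c} W^{bf]}{}_{de];i}{}^{i}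
 + (2/(n−4)) δ^{[a}_{[c} W^{|i|b}{}_{de];i}{}^{f]} + (2/(n−4)) δ^{[a}_{[c} W^{bf]}{}_{|i|d;e]}{}^{i}
 + (4/((n−3)(n−4))) δ^{[a}_{[c} δ^{b}_{d} W^{f]i}{}_{e]j;i}{}^{j}`. -/
def Constraint8 {n : ℕ} (η : Fin n → ℝ)
    (W : (Fin n → ℝ) → Fin n → Fin n → Fin n → Fin n → ℝ) : Prop :=
  ∀ x a b f c d e,
    asym33 (fun a b f c d e => pd f (pd e (W · a b c d)) x) a b f c d e =
      (1 / ((n : ℝ) - 4)) *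
          asym33 (fun a b f c d e =>
            gm η a c * ∑ i, η i * pd i (pd i (W · b f d e)) x) a b f c d e
      + (2 / ((n : ℝ) - 4)) *
          asym33 (fun a b f c d e =>
            gm η a c * ∑ i, η i * pd f (pd i (W · i b d e)) x) a b f c d e
      + (2 / ((n : ℝ) - 4)) *
          asym33 (fun a b f c d e =>
            gm η a c * ∑ i, η i * pd i (pd e (W · b f i d)) x) a b f c d e
      + (4 / (((n : ℝ) - 3) * ((n : ℝ) - 4))) *
          asym33 (fun a b f c d e =>
            gm η a c * gm η b d *
              ∑ i, ∑ j, η i * η j * pd j (pd i (W · f i e j)) x) a b f c d e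

/-- Constraint (10), fully lowered form:
`W^{[ab}{}_{cd;i}{}^{|i|e]} + 2 W^{[ab}{}_{i[c;d]}{}^{|i|e]}
 + (4/(n−3)) δ^{[a}_{[c} W^{b|i}{}_{d]j;i}{}^{j|e]} = 0`,
antisymmetrized over the upper indices `a b e` and (where indicated) the lower indices
`c d`. -/
def Constraint10 {n : ℕ} (η : Fin n → ℝ)
    (W : (Fin n → ℝ) → Fin n → Fin n → Fin n → Fin n → ℝ) : Prop :=
  ∀ x a b e c d,
    asym3 (fun a b e =>
      (∑ i, η i * pd e (pd i (pd i (W · a b c d))) x)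
      + 2 * asym2 (fun c d =>
            ∑ i, η i * pd e (pd i (pd d (W · a b i c))) x) c d
      + (4 / ((n : ℝ) - 3)) * asym2 (fun c d =>
            gm η a c *
              ∑ i, ∑ j, η i * η j * pd e (pd j (pd i (W · b i d j))) x) c d) a b e
    = 0


private lemma lovelock_six_le {n : ℕ} (a b c d e f : Fin n)
    (h1 : a ≠ b) (h2 : a ≠ c) (h3 : a ≠ d) (h4 : a ≠ e) (h5 : a ≠ f)
    (h6 : b ≠ c) (h7 : b ≠ d) (h8 : b ≠ e) (h9 : b ≠ f)
    (h10 : c ≠ d) (h11 : c ≠ e) (h12 : c ≠ f)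
    (h13 : d ≠ e) (h14 : d ≠ f) (h15 : e ≠ f) : 6 ≤ n := by
  have hc : ({a, b, c, d, e, f} : Finset (Fin n)).card = 6 := by
    rw [Finset.card_insert_of_notMem (by simp [h1, h2, h3, h4, h5]),
        Finset.card_insert_of_notMem (by simp [h6, h7, h8, h9]),
        Finset.card_insert_of_notMem (by simp [h10, h11, h12]),
        Finset.card_insert_of_notMem (by simp [h13, h14]),
        Finset.card_insert_of_notMem (by simp [h15]),
        Finset.card_singleton]
  have hle := Finset.card_le_univ ({a, b, c, d, e, f} : Finset (Fin n))
  rwa [hc, Fintype.card_fin] at hle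

private lemma lovelock_sum3 {n : ℕ} (f : Fin n → ℝ) (a b c : Fin n)
    (hu : (Finset.univ : Finset (Fin n)) = {a, b, c})
    (h1 : a ≠ b) (h2 : a ≠ c) (h3 : b ≠ c) :
    ∑ i, f i = f a + f b + f c := by
  rw [hu, Finset.sum_insert (by simp [h1, h2]), Finset.sum_insert (by simp [h3]),
    Finset.sum_singleton]
  ring

private lemma lovelock_sum4 {n : ℕ} (f : Fin n → ℝ) (a b c d : Fin n)
    (hu : (Finset.univ : Finset (Fin n)) = {a, b, c, d})
    (h1 : a ≠ b) (h2 : a ≠ c) (h3 : a ≠ d) (h4 : b ≠ c) (h5 : b ≠ d) (h6 : c ≠ d) :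
    ∑ i, f i = f a + f b + f c + f d := by
  rw [hu, Finset.sum_insert (by simp [h1, h2, h3]), Finset.sum_insert (by simp [h4, h5]),
    Finset.sum_insert (by simp [h6]), Finset.sum_singleton]
  ring

private lemma lovelock_sum5 {n : ℕ} (f : Fin n → ℝ) (a b c d e : Fin n)
    (hu : (Finset.univ : Finset (Fin n)) = {a, b, c, d, e})
    (h1 : a ≠ b) (h2 : a ≠ c) (h3 : a ≠ d) (h4 : a ≠ e)
    (h5 : b ≠ c) (h6 : b ≠ d) (h7 : b ≠ e) (h8 : c ≠ d) (h9 : c ≠ e) (h10 : d ≠ e) :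
    ∑ i, f i = f a + f b + f c + f d + f e := by
  rw [hu, Finset.sum_insert (by simp [h1, h2, h3, h4]),
    Finset.sum_insert (by simp [h5, h6, h7]), Finset.sum_insert (by simp [h8, h9]),
    Finset.sum_insert (by simp [h10]), Finset.sum_singleton]
  ring

/-- **Lovelock's dimensionally dependent identity (dimension at most five).**  A six-index
array on an index set of size `n ≤ 5` which is antisymmetric in its three upper slots,
antisymmetric in its three lower slots, and trace-free over its third upper and third
lower slot, vanishes identically. -/
theorem lovelock_identity_dim_le_five
    (n : ℕ) (hn : n ≤ 5)
    (T : Fin n → Fin n → Fin n → Fin n → Fin n → Fin n → ℝ)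
    (hup12 : ∀ a b f c d e, T a b f c d e = - T b a f c d e)
    (hup23 : ∀ a b f c d e, T a b f c d e = - T a f b c d e)
    (hlo12 : ∀ a b f c d e, T a b f c d e = - T a b f d c e)
    (hlo23 : ∀ a b f c d e, T a b f c d e = - T a b f c e d)
    (htr : ∀ a b c d, ∑ i, T a b i c d i = 0) :
    ∀ a b f c d e, T a b f c d e = 0 := by
  -- composite swap lemmas
  have su13 : ∀ a b f c d e, T a b f c d e = - T f b a c d e := by
    intro a b f c d e
    rw [hup12, hup23, hup12]; ring
  have sl13 : ∀ a b f c d e, T a b f c d e = - T a b f e d c := by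
    intro a b f c d e
    rw [hlo12, hlo23, hlo12]; ring
  -- vanishing on repeated indices
  have hz12 : ∀ a f c d e, T a a f c d e = 0 := by
    intro a f c d e; have h := hup12 a a f c d e; linarith
  have hz23 : ∀ a b c d e, T a b b c d e = 0 := by
    intro a b c d e; have h := hup23 a b b c d e; linarith
  have hz13 : ∀ a b c d e, T a b a c d e = 0 := by
    intro a b c d e; have h := su13 a b a c d e; linarith
  have hz45 : ∀ a b f c e, T a b f c c e = 0 := by
    intro a b f c e; have h := hlo12 a b f c c e; linarith
  have hz56 : ∀ a b f c d, T a b f c d d = 0 := by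
    intro a b f c d; have h := hlo23 a b f c d d; linarith
  have hz46 : ∀ a b f c d, T a b f c d c = 0 := by
    intro a b f c d; have h := sl13 a b f c d c; linarith
  -- simultaneous swaps keep sign
  have sym13 : ∀ p q r s t u, T p q r s t u = T r q p u t s := by
    intro p q r s t u; rw [su13, sl13]; ring
  have sym23 : ∀ p q r s t u, T p q r s t u = T p r q s u t := by
    intro p q r s t u; rw [hup23, hlo23]; ring
  -- either the universe is a given finset, or there is an element outside it
  have key : ∀ s : Finset (Fin n), (Finset.univ : Finset (Fin n)) = s ∨ ∃ m, m ∉ s := by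
    intro s
    by_cases h : (Finset.univ : Finset (Fin n)) ⊆ s
    · exact Or.inl (subset_antisymm h (Finset.subset_univ s))
    · obtain ⟨m, _, hm⟩ := Finset.not_subset.mp h
      exact Or.inr ⟨m, hm⟩
  -- Case C : both pairs coincide
  have caseC : ∀ a b k, a ≠ b → a ≠ k → b ≠ k → T a b k a b k = 0 := by
    intro a b k hab hak hbk
    rcases key {a, b, k} with hu | ⟨m, hm⟩
    · have E1 := htr a b a b
      rw [lovelock_sum3 (fun i => T a b i a b i) a b k hu hab hak hbk] at E1
      rw [hz13, hz23] at E1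
      linarith
    · simp only [Finset.mem_insert, Finset.mem_singleton, not_or] at hm
      obtain ⟨hma, hmb, hmk⟩ := hm
      rcases key {a, b, k, m} with hu | ⟨l, hl⟩
      · have E1 := htr a b a b
        rw [lovelock_sum4 (fun i => T a b i a b i) a b k m hu hab hak (Ne.symm hma) hbk
          (Ne.symm hmb) (Ne.symm hmk)] at E1
        have E2 := htr a k a k
        rw [lovelock_sum4 (fun i => T a k i a k i) a b k m hu hab hak (Ne.symm hma) hbk
          (Ne.symm hmb) (Ne.symm hmk)] at E2
        have E3 := htr a m a m
        rw [lovelock_sum4 (fun i => T a m i a m i) a b k m hu hab hak (Ne.symm hma) hbk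
          (Ne.symm hmb) (Ne.symm hmk)] at E3
        rw [hz13, hz23] at E1 E2 E3
        linarith [sym23 a k b a k b, sym23 a m b a m b, sym23 a m k a m k]
      · simp only [Finset.mem_insert, Finset.mem_singleton, not_or] at hl
        obtain ⟨hla, hlb, hlk, hlm⟩ := hl
        rcases key {a, b, k, m, l} with hu | ⟨w, hw⟩
        · have hne : a ≠ b := hab
          have s5 : ∀ p q r s : Fin n, (∑ i, T p q i r s i) =
              T p q a r s a + T p q b r s b + T p q k r s k + T p q m r s m +
                T p q l r s l := by
            intro p q r s
            exact lovelock_sum5 (fun i => T p q i r s i) a b k m l hu hab hak (Ne.symm hma)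
              (Ne.symm hla) hbk (Ne.symm hmb) (Ne.symm hlb) (Ne.symm hmk) (Ne.symm hlk) (Ne.symm hlm)
          have E1 := htr a b a b; rw [s5] at E1
          have E2 := htr a k a k; rw [s5] at E2
          have E3 := htr a m a m; rw [s5] at E3
          have E4 := htr a l a l; rw [s5] at E4
          have E5 := htr b k b k; rw [s5] at E5
          have E6 := htr b m b m; rw [s5] at E6
          have E7 := htr b l b l; rw [s5] at E7
          have E8 := htr k m k m; rw [s5] at E8
          have E9 := htr k l k l; rw [s5] at E9
          have E10 := htr m l m l; rw [s5] at E10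
          rw [hz13, hz23] at E1 E2 E3 E4 E5 E6 E7 E8 E9 E10
          linarith [sym23 a k b a k b, sym23 a m b a m b, sym23 a m k a m k,
            sym23 a l b a l b, sym23 a l k a l k, sym23 a l m a l m,
            sym23 b m k b m k, sym23 b l k b l k, sym23 b l m b l m,
            sym23 k l m k l m,
            sym13 b k a b k a, sym13 b m a b m a, sym13 b l a b l a,
            sym13 k m a k m a, sym13 k m b k m b, sym13 k l a k l a,
            sym13 k l b k l b, sym13 m l a m l a, sym13 m l b m l b,
            sym13 m l k m l k]
        · simp only [Finset.mem_insert, Finset.mem_singleton, not_or] at hw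
          obtain ⟨hwa, hwb, hwk, hwm, hwl⟩ := hw
          have h6 := lovelock_six_le a b k m l w hab hak (Ne.symm hma) (Ne.symm hla) (Ne.symm hwa)
            hbk (Ne.symm hmb) (Ne.symm hlb) (Ne.symm hwb) (Ne.symm hmk) (Ne.symm hlk) (Ne.symm hwk) (Ne.symm hlm)
            (Ne.symm hwm) (Ne.symm hwl)
          omega
  -- Case B : the pairs share exactly one element
  have caseB : ∀ a b d k, a ≠ b → a ≠ d → a ≠ k → b ≠ d → b ≠ k → d ≠ k →
      T a b k a d k = 0 := by
    intro a b d k hab had hak hbd hbk hdk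
    rcases key {a, b, d, k} with hu | ⟨m, hm⟩
    · have E1 := htr a b a d
      rw [lovelock_sum4 (fun i => T a b i a d i) a b d k hu hab had hak hbd hbk hdk] at E1
      rw [hz13, hz23, hz56] at E1
      linarith
    · simp only [Finset.mem_insert, Finset.mem_singleton, not_or] at hm
      obtain ⟨hma, hmb, hmd, hmk⟩ := hm
      rcases key {a, b, d, k, m} with hu | ⟨w, hw⟩
      · have s5 : ∀ p q r s : Fin n, (∑ i, T p q i r s i) =
            T p q a r s a + T p q b r s b + T p q d r s d + T p q k r s k +
              T p q m r s m := by
          intro p q r s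
          exact lovelock_sum5 (fun i => T p q i r s i) a b d k m hu hab had hak (Ne.symm hma)
            hbd hbk (Ne.symm hmb) hdk (Ne.symm hmd) (Ne.symm hmk)
        have E1 := htr a b a d; rw [s5] at E1
        have E2 := htr k b k d; rw [s5] at E2
        have E3 := htr m b m d; rw [s5] at E3
        rw [hz13, hz23, hz56] at E1 E2 E3
        linarith [sym13 k b a k d a, sym13 m b a m d a, sym13 m b k m d k]
      · simp only [Finset.mem_insert, Finset.mem_singleton, not_or] at hw
        obtain ⟨hwa, hwb, hwd, hwk, hwm⟩ := hw
        have h6 := lovelock_six_le a b d k m w hab had hak (Ne.symm hma) (Ne.symm hwa)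
          hbd hbk (Ne.symm hmb) (Ne.symm hwb) hdk (Ne.symm hmd) (Ne.symm hwd) (Ne.symm hmk) (Ne.symm hwk) (Ne.symm hwm)
        omega
  -- Case A : disjoint pairs
  have caseA : ∀ a b c d k, a ≠ b → a ≠ c → a ≠ d → a ≠ k → b ≠ c → b ≠ d → b ≠ k →
      c ≠ d → c ≠ k → d ≠ k → T a b k c d k = 0 := by
    intro a b c d k hab hac had hak hbc hbd hbk hcd hck hdk
    rcases key {a, b, c, d, k} with hu | ⟨w, hw⟩
    · have E1 := htr a b c d
      rw [lovelock_sum5 (fun i => T a b i c d i) a b c d k hu hab hac had hak hbc hbd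
        hbk hcd hck hdk] at E1
      rw [hz13, hz23, hz46, hz56] at E1
      linarith
    · simp only [Finset.mem_insert, Finset.mem_singleton, not_or] at hw
      obtain ⟨hwa, hwb, hwc, hwd, hwk⟩ := hw
      have h6 := lovelock_six_le a b c d k w hab hac had hak (Ne.symm hwa) hbc hbd hbk
        (Ne.symm hwb) hcd hck (Ne.symm hwc) hdk (Ne.symm hwd) (Ne.symm hwk)
      omega
  -- components with a shared third index vanish
  have X0 : ∀ a b c d k, T a b k c d k = 0 := by
    intro a b c d k
    by_cases hka : k = a
    · rw [hka]; exact hz13 a b c d a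
    by_cases hkb : k = b
    · rw [hkb]; exact hz23 a b c d b
    by_cases hkc : k = c
    · rw [hkc]; exact hz46 a b c c d
    by_cases hkd : k = d
    · rw [hkd]; exact hz56 a b d c d
    by_cases hab : a = b
    · rw [hab]; exact hz12 b k c d k
    by_cases hcd : c = d
    · rw [hcd]; exact hz45 a b k d k
    by_cases hac : a = c
    · subst hac
      by_cases hbd : b = d
      · subst hbd
        exact caseC a b k hab (fun h => hka h.symm) (fun h => hkb h.symm)
      · exact caseB a b d k hab hcd (fun h => hka h.symm) hbd (fun h => hkb h.symm)
          (fun h => hkd h.symm)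
    by_cases had : a = d
    · subst had
      rw [hlo12]
      by_cases hbc : b = c
      · subst hbc
        have := caseC a b k hac (fun h => hka h.symm)
          (fun h => hkb h.symm)
        linarith
      · have := caseB a b c k hab hac (fun h => hka h.symm) hbc (fun h => hkb h.symm)
          (fun h => hkc h.symm)
        linarith
    by_cases hbc : b = c
    · subst hbc
      rw [hup12]
      have := caseB b a d k (fun h => hab h.symm) hcd (fun h => hkb h.symm) had
        (fun h => hka h.symm) (fun h => hkd h.symm)
      linarith
    by_cases hbd : b = d
    · subst hbd
      rw [hup12, hlo12]
      have := caseB b a c k (fun h => hab h.symm) hbc (fun h => hkb h.symm) hac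
        (fun h => hka h.symm) (fun h => hkc h.symm)
      linarith
    · exact caseA a b c d k hab hac had (fun h => hka h.symm) hbc hbd
        (fun h => hkb h.symm) hcd (fun h => hkc h.symm) (fun h => hkd h.symm)
  -- main argument : pigeonhole on the two triples
  intro a b f c d e
  by_cases hab : a = b
  · rw [hab]; exact hz12 b f c d e
  by_cases haf : a = f
  · rw [haf]; exact hz13 f b c d e
  by_cases hbf : b = f
  · rw [hbf]; exact hz23 a f c d e
  by_cases hcd : c = d
  · rw [hcd]; exact hz45 a b f d e
  by_cases hce : c = e
  · rw [hce]; exact hz46 a b f e d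
  by_cases hde : d = e
  · rw [hde]; exact hz56 a b f c e
  by_cases hfe : f = e
  · rw [hfe]; exact X0 a b c d e
  by_cases hfd : f = d
  · rw [hfd, hlo23]
    have := X0 a b c e d
    linarith
  by_cases hfc : f = c
  · rw [hfc, sl13]
    have := X0 a b e d c
    linarith
  by_cases hbe : b = e
  · rw [hbe, hup23]
    have := X0 a f c d e
    linarith
  by_cases hbd : b = d
  · rw [hbd, hup23, hlo23]
    have := X0 a f c e d
    linarith
  by_cases hbc : b = c
  · rw [hbc, hup23, sl13]
    have := X0 a f e d c
    linarith
  by_cases hae : a = e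
  · rw [hae, su13]
    have := X0 f b c d e
    linarith
  by_cases had : a = d
  · rw [had, su13, hlo23]
    have := X0 f b c e d
    linarith
  by_cases hac : a = c
  · rw [hac, su13, sl13]
    have := X0 f b e d c
    linarith
  · exfalso
    have h6 := lovelock_six_le a b f c d e hab haf hac had hae hbf hbc hbd hbe
      hfc hfd hfe hcd hce hde
    omega
end
end

section
/- Constraint for divergence-free Weyl candidates (equation (11)). Let n ≥ 5 and let W_{abcd} be a smooth Weyl candidate on flat ℝⁿ that in addition is divergence-free, W^a_{bcd;a} = 0. If W admits a four times continuously differentiable Lanczos potential L_{abc} with L_{abc} = L_{[ab]c} and L_{ab}^{b} = 0 satisfying equation (5), then W^{ab}_{[cd;}{}^{i}{}_{|i|e]} = 0, i.e. the antisymmetrization over the lower indices c, d, e of the contracted second derivative ∂^i∂_i applied after ∂ on W^{ab}_{cd} vanishes. -/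
open scoped ContDiff

noncomputable section

/-!
Write `V_{bc} = ∂^a L_{abc}`, `S = V + Vᵀ` and `P_d = ∂^a V_{da}` (`divFirst`, `divFirstSymm`,
`doubleDiv`). Antisymmetry of `L` turns (5) into an expression in `∂L` and `S`, and the divergence
condition then expresses `□ L_{cdb}` through first derivatives of `V`, `∂^a L_{cda}`, `S` and `P`.
One more divergence of that identity, traced with the gauge condition, gives `∂^a P_a = 0` and
`□ S_{bd} = ∂_b P_d + ∂_d P_b` (this is where `n ≠ 3` enters). Substituting both into `□ W` shows
that for fixed `a b` the tensor `□ W_{abcd} = ∂_d H_c - ∂_c H_d` is a curl (`H = boxRhs5Potential`),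
so its gradient antisymmetrized over `c d e` vanishes by the symmetry of second derivatives.
-/

section PartialDerivative

variable {n : ℕ} {f g : (Fin n → ℝ) → ℝ}

-- Smoothness orders are written as casts `((m : ℕ) : WithTop ℕ∞)`, so that `fun_prop` can count
-- derivatives by unifying `m + 1` with a numeral.
@[fun_prop]
theorem ContDiff.pd {m : ℕ} (hf : ContDiff ℝ (m + 1 : ℕ) f) (i : Fin n) :
    ContDiff ℝ m (pd i f) :=
  (hf.fderiv_right (by push_cast; exact le_rfl)).clm_apply contDiff_const

@[fun_prop]
theorem ContDiff.differentiable_of_succ {m : ℕ} (hf : ContDiff ℝ (m + 1 : ℕ) f) :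
    Differentiable ℝ f :=
  hf.differentiable (by norm_num)

theorem pd_add (hf : Differentiable ℝ f) (hg : Differentiable ℝ g) (i : Fin n) :
    pd i (fun x => f x + g x) = fun x => pd i f x + pd i g x := by
  funext x
  simp [pd, fderiv_fun_add (hf x) (hg x)]

theorem pd_sub (hf : Differentiable ℝ f) (hg : Differentiable ℝ g) (i : Fin n) :
    pd i (fun x => f x - g x) = fun x => pd i f x - pd i g x := by
  funext x
  simp [pd, fderiv_fun_sub (hf x) (hg x)]

theorem pd_const_mul (c : ℝ) (f : (Fin n → ℝ) → ℝ) (i : Fin n) :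
    pd i (fun x => c * f x) = fun x => c * pd i f x := by
  funext x
  change fderiv ℝ (c • f) x _ = _
  rw [fderiv_const_smul_field]
  rfl

theorem pd_neg (f : (Fin n → ℝ) → ℝ) (i : Fin n) :
    pd i (fun x => -f x) = fun x => -pd i f x := by
  simpa using pd_const_mul (-1) f i

theorem pd_sum {ι : Type*} (s : Finset ι) {F : ι → (Fin n → ℝ) → ℝ}
    (hF : ∀ k, Differentiable ℝ (F k)) (i : Fin n) :
    pd i (fun x => ∑ k ∈ s, F k x) = fun x => ∑ k ∈ s, pd i (F k) x := by
  funext x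
  simp [pd, fderiv_fun_sum fun k _ => hF k x]

theorem pd_const (c : ℝ) (i : Fin n) : pd i (fun _ => c) = fun _ => 0 := by
  funext x
  simp [pd]

theorem pd_comm (hf : ContDiff ℝ (2 : ℕ) f) (i j : Fin n) : pd i (pd j f) = pd j (pd i f) := by
  funext x
  have hdiff : Differentiable ℝ (fderiv ℝ f) :=
    (hf.fderiv_right (m := 1) (by norm_num)).differentiable (by norm_num)
  have hpd : ∀ u v : Fin n → ℝ,
      fderiv ℝ (fun y => fderiv ℝ f y u) x v = fderiv ℝ (fderiv ℝ f) x v u := fun u v => by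
    rw [fderiv_clm_apply (hdiff x) (differentiableAt_const u)]
    simp
  unfold pd
  rw [hpd, hpd]
  exact hf.contDiffAt.isSymmSndFDerivAt (by norm_num) _ _

theorem asym3_pd_curl_eq_zero {H : Fin n → (Fin n → ℝ) → ℝ} (hH : ∀ c, ContDiff ℝ (2 : ℕ) (H c))
    (x : Fin n → ℝ) (c d e : Fin n) :
    asym3 (fun c d e => pd e (fun y => pd d (H c) y - pd c (H d) y) x) c d e = 0 := by
  simp (disch := fun_prop) only [asym3, pd_sub]
  rw [pd_comm (hH c) e d, pd_comm (hH d) e c, pd_comm (hH e) d c]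
  ring

end PartialDerivative

section Operators

variable {n : ℕ} (η : Fin n → ℝ)

def box (f : (Fin n → ℝ) → ℝ) : (Fin n → ℝ) → ℝ :=
  fun x => ∑ i, η i * pd i (pd i f) x

def divergence (F : Fin n → (Fin n → ℝ) → ℝ) : (Fin n → ℝ) → ℝ :=
  fun x => ∑ a, η a * pd a (F a) x

variable {η} {f g : (Fin n → ℝ) → ℝ} {F G : Fin n → (Fin n → ℝ) → ℝ}

@[fun_prop]
theorem ContDiff.box {m : ℕ} (hf : ContDiff ℝ (m + 2 : ℕ) f) : ContDiff ℝ m (box η f) := by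
  unfold _root_.box
  fun_prop

@[fun_prop]
theorem ContDiff.divergence {m : ℕ} (hF : ∀ a, ContDiff ℝ (m + 1 : ℕ) (F a)) :
    ContDiff ℝ m (divergence η F) := by
  unfold _root_.divergence
  fun_prop

theorem divergence_pd_self (f : (Fin n → ℝ) → ℝ) : divergence η (fun a => pd a f) = box η f :=
  rfl

theorem box_add (hf : ContDiff ℝ (2 : ℕ) f) (hg : ContDiff ℝ (2 : ℕ) g) :
    box η (fun x => f x + g x) = fun x => box η f x + box η g x := by
  funext x
  simp (disch := fun_prop) only [box, pd_add, mul_add, Finset.sum_add_distrib]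

theorem box_sub (hf : ContDiff ℝ (2 : ℕ) f) (hg : ContDiff ℝ (2 : ℕ) g) :
    box η (fun x => f x - g x) = fun x => box η f x - box η g x := by
  funext x
  simp (disch := fun_prop) only [box, pd_sub, mul_sub, Finset.sum_sub_distrib]

theorem box_const_mul (c : ℝ) (f : (Fin n → ℝ) → ℝ) :
    box η (fun x => c * f x) = fun x => c * box η f x := by
  funext x
  simp only [box, pd_const_mul, Finset.mul_sum]
  exact Finset.sum_congr rfl fun i _ => by ring

theorem box_sum (hF : ∀ k, ContDiff ℝ (2 : ℕ) (F k)) :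
    box η (fun x => ∑ k, F k x) = fun x => ∑ k, box η (F k) x := by
  funext x
  simp (disch := fun_prop) only [box, pd_sum, Finset.mul_sum]
  exact Finset.sum_comm

theorem box_const (c : ℝ) : box η (fun _ => c) = fun _ => 0 := by
  funext x
  simp [box, pd_const]

theorem box_pd (hf : ContDiff ℝ (3 : ℕ) f) (j : Fin n) : box η (pd j f) = pd j (box η f) := by
  funext x
  unfold box
  simp (disch := fun_prop) only [pd_sum, pd_const_mul]
  refine Finset.sum_congr rfl fun i _ => ?_
  rw [pd_comm (f := f) (hf.of_le (by norm_num)) i j, pd_comm (f := pd i f) (by fun_prop) i j]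

theorem pd_box (hf : ContDiff ℝ (3 : ℕ) f) (j : Fin n) (x : Fin n → ℝ) :
    pd j (box η f) x = ∑ i, η i * pd j (pd i (pd i f)) x := by
  unfold box
  simp (disch := fun_prop) only [pd_sum, pd_const_mul]

theorem divergence_add (hF : ∀ a, Differentiable ℝ (F a)) (hG : ∀ a, Differentiable ℝ (G a)) :
    divergence η (fun a x => F a x + G a x) = fun x => divergence η F x + divergence η G x := by
  funext x
  simp only [divergence, pd_add (hF _) (hG _), mul_add, Finset.sum_add_distrib]

theorem divergence_sub (hF : ∀ a, Differentiable ℝ (F a)) (hG : ∀ a, Differentiable ℝ (G a)) :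
    divergence η (fun a x => F a x - G a x) = fun x => divergence η F x - divergence η G x := by
  funext x
  simp only [divergence, pd_sub (hF _) (hG _), mul_sub, Finset.sum_sub_distrib]

theorem divergence_const_mul (c : ℝ) (F : Fin n → (Fin n → ℝ) → ℝ) :
    divergence η (fun a x => c * F a x) = fun x => c * divergence η F x := by
  funext x
  simp only [divergence, pd_const_mul, Finset.mul_sum]
  exact Finset.sum_congr rfl fun i _ => by ring

theorem divergence_pd (hF : ∀ a, ContDiff ℝ (2 : ℕ) (F a)) (j : Fin n) :
    divergence η (fun a => pd j (F a)) = pd j (divergence η F) := by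
  funext x
  unfold divergence
  simp (disch := fun_prop) only [pd_sum, pd_const_mul, pd_comm (hF _)]

theorem gm_comm (a b : Fin n) : gm η a b = gm η b a := by
  unfold gm
  split_ifs with h h' h' <;> simp_all

theorem divergence_gm_mul (hη : ∀ i, η i = 1 ∨ η i = -1) (c : Fin n) (f : (Fin n → ℝ) → ℝ) :
    divergence η (fun a x => gm η a c * f x) = pd c f := by
  funext x
  simp only [divergence, pd_const_mul, gm]
  rw [Finset.sum_eq_single c (fun a _ hac => by simp [hac]) (by simp)]
  rcases hη c with h | h <;> simp [h]

theorem divergence_comm {T : Fin n → Fin n → (Fin n → ℝ) → ℝ}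
    (hT : ∀ a i, ContDiff ℝ (2 : ℕ) (T a i)) :
    divergence η (fun a => divergence η (T a)) =
      divergence η (fun i => divergence η (fun a => T a i)) := by
  funext x
  unfold divergence
  simp (disch := fun_prop) only [pd_sum, pd_const_mul, Finset.mul_sum]
  rw [Finset.sum_comm]
  refine Finset.sum_congr rfl fun i _ => Finset.sum_congr rfl fun a _ => ?_
  rw [pd_comm (hT a i)]
  ring

theorem divergence_neg (F : Fin n → (Fin n → ℝ) → ℝ) :
    divergence η (fun a x => -F a x) = fun x => -divergence η F x := by
  simpa using divergence_const_mul (η := η) (-1) F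

theorem divergence_divergence_of_antisymm {T : Fin n → Fin n → (Fin n → ℝ) → ℝ}
    (hT : ∀ a i, ContDiff ℝ (2 : ℕ) (T a i)) (hanti : ∀ a i, T a i = fun x => -T i a x) :
    divergence η (fun a => divergence η (T a)) = fun _ => 0 := by
  have hswap : ∀ i, divergence η (fun a => T a i) = fun x => -divergence η (T i) x := fun i => by
    rw [show (fun a => T a i) = fun a x => -T i a x from funext fun a => hanti a i,
      divergence_neg]
  funext x
  have h := congrFun (divergence_comm (η := η) hT) x
  simp only [hswap, divergence_neg] at h
  linarith

theorem box_divergence (hF : ∀ a, ContDiff ℝ (3 : ℕ) (F a)) :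
    box η (divergence η F) = divergence η (fun a => box η (F a)) := by
  unfold divergence
  rw [box_sum (by fun_prop)]
  simp (disch := fun_prop) only [box_const_mul, box_pd]

end Operators

section Lanczos

variable {n : ℕ} (η : Fin n → ℝ) (L : (Fin n → ℝ) → Fin n → Fin n → Fin n → ℝ)

def divFirst (b c : Fin n) : (Fin n → ℝ) → ℝ :=
  divergence η (fun a => (L · a b c))

def divLast (c d : Fin n) : (Fin n → ℝ) → ℝ :=
  divergence η (fun a => (L · c d a))

def divFirstSymm (b d : Fin n) : (Fin n → ℝ) → ℝ :=
  fun x => divFirst η L b d x + divFirst η L d b x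

def doubleDiv (d : Fin n) : (Fin n → ℝ) → ℝ :=
  divergence η (divFirst η L d)

variable {η L}

section Regularity

variable {m : ℕ}

@[fun_prop]
theorem ContDiff.divFirst (hL : ∀ a b c, ContDiff ℝ (m + 1 : ℕ) (L · a b c)) (b c : Fin n) :
    ContDiff ℝ m (divFirst η L b c) := by
  unfold _root_.divFirst
  fun_prop

@[fun_prop]
theorem ContDiff.divLast (hL : ∀ a b c, ContDiff ℝ (m + 1 : ℕ) (L · a b c)) (c d : Fin n) :
    ContDiff ℝ m (divLast η L c d) := by
  unfold _root_.divLast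
  fun_prop

@[fun_prop]
theorem ContDiff.divFirstSymm (hL : ∀ a b c, ContDiff ℝ (m + 1 : ℕ) (L · a b c)) (b d : Fin n) :
    ContDiff ℝ m (divFirstSymm η L b d) := by
  unfold _root_.divFirstSymm
  fun_prop

@[fun_prop]
theorem ContDiff.doubleDiv (hL : ∀ a b c, ContDiff ℝ (m + 2 : ℕ) (L · a b c)) (d : Fin n) :
    ContDiff ℝ m (doubleDiv η L d) := by
  unfold _root_.doubleDiv
  fun_prop

@[fun_prop]
theorem ContDiff.rhs5 (hL : ∀ a b c, ContDiff ℝ (m + 1 : ℕ) (L · a b c))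
    (a b c d : Fin n) : ContDiff ℝ m (rhs5 η L · a b c d) := by
  unfold _root_.rhs5 asym22
  fun_prop

end Regularity

theorem divergence_fst_eq_divFirst (b c : Fin n) :
    divergence η (fun a => (L · a b c)) = divFirst η L b c :=
  rfl

theorem divergence_lst_eq_divLast (c d : Fin n) :
    divergence η (fun a => (L · c d a)) = divLast η L c d :=
  rfl

theorem divergence_divFirst_eq_doubleDiv (d : Fin n) :
    divergence η (divFirst η L d) = doubleDiv η L d :=
  rfl

theorem divFirstSymm_comm (b d : Fin n) : divFirstSymm η L b d = divFirstSymm η L d b := by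
  funext x
  exact add_comm _ _

theorem rhs5_eq (hLasym : ∀ x a b c, L x a b c = -L x b a c) (a b c d : Fin n) :
    (fun x => rhs5 η L x a b c d) = fun x =>
      pd d (L · a b c) x - pd c (L · a b d) x + pd b (L · c d a) x - pd a (L · c d b) x
        + 1 / ((n : ℝ) - 2) * (gm η a c * divFirstSymm η L b d x
          - gm η b c * divFirstSymm η L a d x - gm η a d * divFirstSymm η L b c x
          + gm η b d * divFirstSymm η L a c x) := by
  have hM : ∀ b d x, ∑ i, η i * (pd i (L · b i d) x + pd i (L · d i b) x)
      = -divFirstSymm η L b d x := by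
    intro b d x
    have hbd : ∀ i, (L · b i d) = fun y => -L y i b d := fun i => funext fun y => hLasym y b i d
    have hdb : ∀ i, (L · d i b) = fun y => -L y i d b := fun i => funext fun y => hLasym y d i b
    simp only [hbd, hdb, pd_neg]
    simp only [divFirstSymm, divFirst, divergence, mul_add, mul_neg,
      Finset.sum_add_distrib, Finset.sum_neg_distrib, neg_add]
  funext x
  simp only [rhs5, asym22, hM]
  ring

theorem divergence_divFirst_left_eq_zero (hL : ∀ a b c, ContDiff ℝ (2 : ℕ) (L · a b c))
    (hLasym : ∀ x a b c, L x a b c = -L x b a c) (d : Fin n) :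
    divergence η (fun a => divFirst η L a d) = fun _ => 0 :=
  divergence_divergence_of_antisymm (fun a i => hL i a d)
    fun a i => funext fun x => hLasym x i a d

theorem divergence_divLast_eq_doubleDiv (hL : ∀ a b c, ContDiff ℝ (2 : ℕ) (L · a b c)) (b : Fin n) :
    divergence η (fun a => divLast η L a b) = doubleDiv η L b :=
  divergence_comm fun a i => hL a b i

theorem divergence_divFirstSymm_eq_doubleDiv (hL : ∀ a b c, ContDiff ℝ (2 : ℕ) (L · a b c))
    (hLasym : ∀ x a b c, L x a b c = -L x b a c) (d : Fin n) :
    divergence η (fun a => divFirstSymm η L a d) = doubleDiv η L d := by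
  unfold divFirstSymm
  rw [divergence_add (by fun_prop) (by fun_prop), divergence_divFirst_left_eq_zero hL hLasym]
  simp only [zero_add]
  rfl

theorem trace_divFirstSymm_eq_zero (hL : ∀ a b c, ContDiff ℝ (1 : ℕ) (L · a b c))
    (hgauge : ∀ x a, ∑ b, η b * L x a b b = 0) :
    (fun x => ∑ b, η b * divFirstSymm η L b b x) = fun _ => 0 := by
  have htrace : ∀ a x, ∑ b, η b * pd a (L · a b b) x = 0 := fun a x => by
    have h := congrArg (pd a · x) (funext (hgauge · a))
    simp (disch := fun_prop) only [pd_sum, pd_const_mul, pd_const] at h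
    exact h
  funext x
  calc ∑ b, η b * divFirstSymm η L b b x
      = ∑ b, ∑ a, 2 * η a * (η b * pd a (L · a b b) x) := Finset.sum_congr rfl fun b _ => by
        simp only [divFirstSymm, divFirst, divergence, ← two_mul, Finset.mul_sum]
        exact Finset.sum_congr rfl fun a _ => by ring
    _ = ∑ a, 2 * η a * ∑ b, η b * pd a (L · a b b) x := by
        rw [Finset.sum_comm]
        simp only [Finset.mul_sum]
    _ = 0 := by simp [htrace]

theorem box_lanczos_eq (hη : ∀ i, η i = 1 ∨ η i = -1)
    (hL : ∀ a b c, ContDiff ℝ (2 : ℕ) (L · a b c)) (hLasym : ∀ x a b c, L x a b c = -L x b a c)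
    (hdiv : ∀ b c d, divergence η (fun a => (rhs5 η L · a b c d)) = fun _ => 0) (c d b : Fin n) :
    box η (L · c d b) = fun x =>
      pd d (divFirst η L b c) x - pd c (divFirst η L b d) x + pd b (divLast η L c d) x
        + 1 / ((n : ℝ) - 2) * (pd c (divFirstSymm η L b d) x - pd d (divFirstSymm η L b c) x
          - gm η c b * doubleDiv η L d x + gm η d b * doubleDiv η L c x) := by
  have h := hdiv b c d
  rw [funext fun a => rhs5_eq hLasym a b c d] at h
  simp (disch := fun_prop (disch := norm_num)) only [divergence_add, divergence_sub,
    divergence_const_mul, divergence_gm_mul hη, divergence_pd, divergence_pd_self,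
    divergence_fst_eq_divFirst, divergence_lst_eq_divLast,
    divergence_divFirstSymm_eq_doubleDiv hL hLasym] at h
  funext x
  rw [gm_comm c b, gm_comm d b]
  linear_combination -congrFun h x

theorem box_divFirst_eq (hη : ∀ i, η i = 1 ∨ η i = -1)
    (hL : ∀ a b c, ContDiff ℝ (3 : ℕ) (L · a b c)) (hLasym : ∀ x a b c, L x a b c = -L x b a c)
    (hdiv : ∀ b c d, divergence η (fun a => (rhs5 η L · a b c d)) = fun _ => 0) (b d : Fin n) :
    box η (divFirst η L b d) = fun x =>
      pd b (doubleDiv η L d) x - box η (divFirst η L d b) x + pd d (doubleDiv η L b) x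
        + 1 / ((n : ℝ) - 2) * (box η (divFirstSymm η L b d) x - pd b (doubleDiv η L d) x
          - pd d (doubleDiv η L b) x + gm η b d * divergence η (doubleDiv η L) x) := by
  have hL2 : ∀ a b c, ContDiff ℝ (2 : ℕ) (L · a b c) := fun a b c => (hL a b c).of_le (by norm_num)
  rw [← divergence_fst_eq_divFirst b d, box_divergence (fun a => hL a b d)]
  simp only [box_lanczos_eq hη hL2 hLasym hdiv]
  simp (disch := fun_prop (disch := norm_num)) only [divergence_add, divergence_sub,
    divergence_const_mul, divergence_gm_mul hη, divergence_pd, divergence_pd_self,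
    divergence_divFirst_eq_doubleDiv, divergence_divLast_eq_doubleDiv hL2, divFirstSymm_comm d,
    divergence_divFirstSymm_eq_doubleDiv hL2 hLasym]

theorem box_divFirstSymm_relation (hη : ∀ i, η i = 1 ∨ η i = -1)
    (hL : ∀ a b c, ContDiff ℝ (3 : ℕ) (L · a b c)) (hLasym : ∀ x a b c, L x a b c = -L x b a c)
    (hdiv : ∀ b c d, divergence η (fun a => (rhs5 η L · a b c d)) = fun _ => 0)
    (b d : Fin n) (x : Fin n → ℝ) :
    (1 - 1 / ((n : ℝ) - 2)) *
        (box η (divFirstSymm η L b d) x - pd b (doubleDiv η L d) x - pd d (doubleDiv η L b) x)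
      = 1 / ((n : ℝ) - 2) * gm η b d * divergence η (doubleDiv η L) x := by
  have hS : box η (divFirstSymm η L b d) x
      = box η (divFirst η L b d) x + box η (divFirst η L d b) x := by
    unfold divFirstSymm
    rw [box_add (by fun_prop) (by fun_prop)]
  linear_combination hS + congrFun (box_divFirst_eq hη hL hLasym hdiv b d) x

theorem divergence_doubleDiv_eq_zero (hη : ∀ i, η i = 1 ∨ η i = -1)
    (hL : ∀ a b c, ContDiff ℝ (3 : ℕ) (L · a b c)) (hLasym : ∀ x a b c, L x a b c = -L x b a c)
    (hgauge : ∀ x a, ∑ b, η b * L x a b b = 0)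
    (hdiv : ∀ b c d, divergence η (fun a => (rhs5 η L · a b c d)) = fun _ => 0) :
    divergence η (doubleDiv η L) = fun _ => 0 := by
  funext x
  obtain ⟨κ, hκ⟩ : ∃ κ, 1 / ((n : ℝ) - 2) = κ := ⟨_, rfl⟩
  have hboxtrace : ∑ b, η b * box η (divFirstSymm η L b b) x = 0 := by
    have h := congrArg (box η · x)
      (trace_divFirstSymm_eq_zero (fun a b c => (hL a b c).of_le (by norm_num)) hgauge)
    simp (disch := fun_prop (disch := norm_num)) only [box_sum, box_const_mul, box_const] at h
    exact h
  have hsq : ∀ b, η b * gm η b b = 1 := fun b => by rcases hη b with h | h <;> simp [gm, h]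
  have htrace : (1 - κ) * (0 - 2 * divergence η (doubleDiv η L) x)
      = κ * n * divergence η (doubleDiv η L) x := by
    calc (1 - κ) * (0 - 2 * divergence η (doubleDiv η L) x)
        = ∑ b, η b * ((1 - κ) * (box η (divFirstSymm η L b b) x
            - pd b (doubleDiv η L b) x - pd b (doubleDiv η L b) x)) := by
          rw [← hboxtrace, mul_sub, Finset.mul_sum, divergence, Finset.mul_sum, Finset.mul_sum,
            ← Finset.sum_sub_distrib]
          exact Finset.sum_congr rfl fun b _ => by ring
      _ = ∑ b, κ * divergence η (doubleDiv η L) x * (η b * gm η b b) := by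
          refine Finset.sum_congr rfl fun b _ => ?_
          rw [← hκ, box_divFirstSymm_relation hη hL hLasym hdiv]
          ring
      _ = κ * n * divergence η (doubleDiv η L) x := by
          simp only [hsq, mul_one, Finset.sum_const, Finset.card_univ, Fintype.card_fin,
            nsmul_eq_mul]
          ring
  have hκ2 : κ * ((n : ℝ) - 2) + 2 ≠ 0 := by
    rcases eq_or_ne ((n : ℝ) - 2) 0 with h | h
    · -- `n = 2`, where `κ = 1 / 0 = 0`
      simp [h]
    · rw [← hκ, one_div_mul_cancel h]
      norm_num
  have h := (by linear_combination -htrace :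
    divergence η (doubleDiv η L) x * (κ * ((n : ℝ) - 2) + 2) = 0)
  exact (mul_eq_zero.mp h).resolve_right hκ2

theorem box_divFirstSymm_eq (hn : n ≠ 3) (hη : ∀ i, η i = 1 ∨ η i = -1)
    (hL : ∀ a b c, ContDiff ℝ (3 : ℕ) (L · a b c)) (hLasym : ∀ x a b c, L x a b c = -L x b a c)
    (hgauge : ∀ x a, ∑ b, η b * L x a b b = 0)
    (hdiv : ∀ b c d, divergence η (fun a => (rhs5 η L · a b c d)) = fun _ => 0) (b d : Fin n) :
    box η (divFirstSymm η L b d) = fun x =>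
      pd b (doubleDiv η L d) x + pd d (doubleDiv η L b) x := by
  funext x
  have h := box_divFirstSymm_relation hη hL hLasym hdiv b d x
  rw [divergence_doubleDiv_eq_zero hη hL hLasym hgauge hdiv, mul_zero] at h
  have hκ : 1 - 1 / ((n : ℝ) - 2) ≠ 0 := by
    rw [sub_ne_zero, ne_comm, one_div, Ne, inv_eq_one, sub_eq_iff_eq_add]
    norm_num
    exact_mod_cast hn
  linear_combination (mul_eq_zero.mp h).resolve_left hκ

theorem box_rhs5 (hL : ∀ a b c, ContDiff ℝ (3 : ℕ) (L · a b c))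
    (hLasym : ∀ x a b c, L x a b c = -L x b a c) (a b c d : Fin n) :
    box η (rhs5 η L · a b c d) = fun x =>
      pd d (box η (L · a b c)) x - pd c (box η (L · a b d)) x
        + pd b (box η (L · c d a)) x - pd a (box η (L · c d b)) x
        + 1 / ((n : ℝ) - 2) * (gm η a c * box η (divFirstSymm η L b d) x
          - gm η b c * box η (divFirstSymm η L a d) x - gm η a d * box η (divFirstSymm η L b c) x
          + gm η b d * box η (divFirstSymm η L a c) x) := by
  rw [rhs5_eq hLasym]
  simp (disch := fun_prop (disch := norm_num)) only [box_add, box_sub, box_const_mul, box_pd]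

variable (η L) in
def boxRhs5Potential (a b c : Fin n) : (Fin n → ℝ) → ℝ := fun x =>
  box η (L · a b c) x + pd b (divFirst η L a c) x - pd a (divFirst η L b c) x
    + 1 / ((n : ℝ) - 2) * (pd a (divFirstSymm η L b c) x - pd b (divFirstSymm η L a c) x
      + gm η a c * doubleDiv η L b x - gm η b c * doubleDiv η L a x)

@[fun_prop]
theorem ContDiff.boxRhs5Potential {m : ℕ} (hL : ∀ a b c, ContDiff ℝ (m + 2 : ℕ) (L · a b c))
    (a b c : Fin n) : ContDiff ℝ m (boxRhs5Potential η L a b c) := by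
  unfold _root_.boxRhs5Potential
  fun_prop

theorem box_rhs5_eq_curl (hn : n ≠ 3) (hη : ∀ i, η i = 1 ∨ η i = -1)
    (hL : ∀ a b c, ContDiff ℝ (3 : ℕ) (L · a b c)) (hLasym : ∀ x a b c, L x a b c = -L x b a c)
    (hgauge : ∀ x a, ∑ b, η b * L x a b b = 0)
    (hdiv : ∀ b c d, divergence η (fun a => (rhs5 η L · a b c d)) = fun _ => 0) (a b c d : Fin n) :
    box η (rhs5 η L · a b c d) = fun x =>
      pd d (boxRhs5Potential η L a b c) x - pd c (boxRhs5Potential η L a b d) x := by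
  have hL2 : ∀ a b c, ContDiff ℝ (2 : ℕ) (L · a b c) := fun a b c => (hL a b c).of_le (by norm_num)
  rw [box_rhs5 hL hLasym, box_lanczos_eq hη hL2 hLasym hdiv c d a,
    box_lanczos_eq hη hL2 hLasym hdiv c d b]
  simp only [box_divFirstSymm_eq hn hη hL hLasym hgauge hdiv]
  unfold boxRhs5Potential
  simp (disch := fun_prop (disch := norm_num)) only [pd_add, pd_sub, pd_const_mul]
  rw [pd_comm (f := divFirst η L a c) (by fun_prop) b d,
    pd_comm (f := divFirst η L a d) (by fun_prop) b c,
    pd_comm (f := divFirst η L b c) (by fun_prop) a d,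
    pd_comm (f := divFirst η L b d) (by fun_prop) a c,
    pd_comm (f := divFirstSymm η L a d) (by fun_prop) b c,
    pd_comm (f := divFirstSymm η L a c) (by fun_prop) b d,
    pd_comm (f := divFirstSymm η L b d) (by fun_prop) a c,
    pd_comm (f := divFirstSymm η L b c) (by fun_prop) a d,
    pd_comm (f := divLast η L c d) (by fun_prop) a b,
    gm_comm c a, gm_comm d a, gm_comm c b, gm_comm d b]
  funext x
  ring

end Lanczos

theorem divergence_free_weyl_candidate_constraint_general
    (n : ℕ) (hn : 5 ≤ n) (η : Fin n → ℝ) (hη : ∀ i, η i = 1 ∨ η i = -1)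
    (W : (Fin n → ℝ) → Fin n → Fin n → Fin n → Fin n → ℝ)
    (hdiv : ∀ x b c d, ∑ a, η a * pd a (W · a b c d) x = 0)
    (L : (Fin n → ℝ) → Fin n → Fin n → Fin n → ℝ)
    (hLC4 : ∀ a b c, ContDiff ℝ 4 (fun x => L x a b c))
    (hLasym : ∀ x a b c, L x a b c = - L x b a c)
    (hgauge : ∀ x a, ∑ b, η b * L x a b b = 0)
    (hEq5 : Eq5 η W L) :
    ∀ x a b c d e,
      asym3 (fun c d e =>
        ∑ i, η i * pd e (pd i (pd i (W · a b c d))) x) c d e = 0 := by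
  have hL : ∀ a b c, ContDiff ℝ (4 : ℕ) (L · a b c) := hLC4
  have hW : ∀ a b c d, (W · a b c d) = (rhs5 η L · a b c d) :=
    fun a b c d => funext fun x => hEq5 x a b c d
  have hdiv' : ∀ b c d, divergence η (fun a => (rhs5 η L · a b c d)) = fun _ => 0 :=
    fun b c d => funext fun x => by
      rw [divergence]
      simpa only [hW] using hdiv x b c d
  intro x a b c d e
  have hcurl : ∀ c d e, ∑ i, η i * pd e (pd i (pd i (W · a b c d))) x = pd e (fun y =>
      pd d (boxRhs5Potential η L a b c) y - pd c (boxRhs5Potential η L a b d) y) x := by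
    intro c d e
    rw [hW, ← pd_box (by fun_prop) e x, box_rhs5_eq_curl (by omega) hη
      (fun a b c => (hL a b c).of_le (by norm_num)) hLasym hgauge hdiv']
  simp only [hcurl]
  exact asym3_pd_curl_eq_zero (fun c => by fun_prop) x c d e

/-- **Constraint for divergence-free Weyl candidates (equation (11)).**  If a smooth,
divergence-free (`W^a{}_{bcd;a} = 0`) Weyl candidate on flat `ℝⁿ` (`n ≥ 5`) admits a four
times continuously differentiable Lanczos potential `L` (with `L_{abc} = L_{[ab]c}` and
`L_{ab}{}^b = 0`) via equation (5), then `W^{ab}{}_{[cd;}{}^{i}{}_{|i|e]} = 0`. -/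
theorem divergence_free_weyl_candidate_constraint
    (n : ℕ) (hn : 5 ≤ n) (η : Fin n → ℝ) (hη : ∀ i, η i = 1 ∨ η i = -1)
    (W : (Fin n → ℝ) → Fin n → Fin n → Fin n → Fin n → ℝ)
    (hWsmooth : ∀ a b c d, ContDiff ℝ ∞ (fun x => W x a b c d))
    (hWeyl : WeylCandidate η W)
    (hdiv : ∀ x b c d, ∑ a, η a * pd a (W · a b c d) x = 0)
    (L : (Fin n → ℝ) → Fin n → Fin n → Fin n → ℝ)
    (hLC4 : ∀ a b c, ContDiff ℝ 4 (fun x => L x a b c))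
    (hLasym : ∀ x a b c, L x a b c = - L x b a c)
    (hgauge : ∀ x a, ∑ b, η b * L x a b b = 0)
    (hEq5 : Eq5 η W L) :
    ∀ x a b c d e,
      asym3 (fun c d e =>
        ∑ i, η i * pd e (pd i (pd i (W · a b c d))) x) c d e = 0 :=
  divergence_free_weyl_candidate_constraint_general n hn η hη W hdiv L hLC4 hLasym hgauge hEq5
end
end
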